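/- Let a > 0 be real and let b ∈ ℂ with |b| < 1 and |a·b| < 1. Let s and r be the principal square roots of 1 - b² and 1 - a²b² respectively (both lie in the open right half-plane, so s and r are well-defined and nonzero). Set x₊ := b/s + a·b/r, y₋ := 1/s - 1/r, and M_s'(b) := (i/2)·[[x₊, y₋], [-y₋, -x₊]] ∈ M₂(ℂ). Then det M_s'(b) = 0 if and only if b = 0. -/

import Mathlib

open Complex

/-- The matrix `M_s'(b) = (i/2)·[[x₊, y₋],[-y₋, -x₊]]` with
`x₊ = b/s + ab/r` and `y₋ = 1/s - 1/r`. -/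
noncomputable def Msp (a : ℝ) (b s r : ℂ) : Matrix (Fin 2) (Fin 2) ℂ :=
  (Complex.I / 2) •
    !![b / s + (a : ℂ) * b / r, 1 / s - 1 / r;
       -(1 / s - 1 / r), -(b / s + (a : ℂ) * b / r)]

/-!
Clearing denominators with `s² = 1 - b²` and `r² = 1 - a²b²` gives
`det M_s'(b) = (1 + a b² - s r) / (2 s r)`. Squaring `s r = 1 + a b²` yields
`b² (1 + a)² = 0`, so `b = 0`; conversely at `b = 0` the right half-plane condition
forces `s = r = 1`.
-/

lemma Matrix.det_smul_fin_two_of_neg {R : Type*} [CommRing R] (c x y : R) :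
    (c • !![x, y; -y, -x]).det = c ^ 2 * (y ^ 2 - x ^ 2) := by
  rw [Matrix.det_smul, Matrix.det_fin_two_of, Fintype.card_fin]
  ring

lemma Complex.eq_one_of_sq_eq_one_of_re_pos {z : ℂ} (hz : z ^ 2 = 1) (hre : 0 < z.re) :
    z = 1 := by
  refine (sq_eq_one_iff.mp hz).resolve_right fun h => ?_
  rw [h] at hre
  norm_num at hre

section RootIdentities

variable {K : Type*} [Field K] {b c s r : K}

lemma sq_sub_sq_eq_of_sq_eq (hs2 : s ^ 2 = 1 - b ^ 2) (hr2 : r ^ 2 = 1 - c ^ 2 * b ^ 2)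
    (hs : s ≠ 0) (hr : r ≠ 0) :
    (b / s + c * b / r) ^ 2 - (1 / s - 1 / r) ^ 2 = 2 * (c * b ^ 2 + 1 - s * r) / (s * r) := by
  field_simp
  linear_combination (1 - c ^ 2 * b ^ 2) * hs2 + (b ^ 2 - 1 + 2 * s ^ 2) * hr2

lemma eq_zero_of_mul_eq_of_sq_eq (hs2 : s ^ 2 = 1 - b ^ 2) (hr2 : r ^ 2 = 1 - c ^ 2 * b ^ 2)
    (hc : 1 + c ≠ 0) (h : s * r = c * b ^ 2 + 1) : b = 0 := by
  have hb : b ^ 2 * (1 + c) ^ 2 = 0 := by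
    linear_combination -(s * r + c * b ^ 2 + 1) * h + r ^ 2 * hs2 + (1 - b ^ 2) * hr2
  simpa [hc] using hb

end RootIdentities

theorem statement15_general (a : ℝ) (ha : 0 < a) (b : ℂ)
    (s r : ℂ)
    (hs2 : s ^ 2 = 1 - b ^ 2) (hsre : 0 < s.re)
    (hr2 : r ^ 2 = 1 - (a : ℂ) ^ 2 * b ^ 2) (hrre : 0 < r.re) :
    (Msp a b s r).det = 0 ↔ b = 0 := by
  have hs : s ≠ 0 := fun h => by simp [h] at hsre
  have hr : r ≠ 0 := fun h => by simp [h] at hrre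
  have hdet : (Msp a b s r).det = (a * b ^ 2 + 1 - s * r) / (2 * (s * r)) := by
    rw [Msp, Matrix.det_smul_fin_two_of_neg, ← neg_sub, sq_sub_sq_eq_of_sq_eq hs2 hr2 hs hr,
      div_pow, I_sq]
    field_simp
  have ha' : 1 + (a : ℂ) ≠ 0 := by exact_mod_cast (by positivity : (1 + a : ℝ) ≠ 0)
  rw [hdet, div_eq_zero_iff, sub_eq_zero, or_iff_left (by simp [hs, hr])]
  constructor
  · exact fun h => eq_zero_of_mul_eq_of_sq_eq hs2 hr2 ha' h.symm
  · rintro rfl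
    rw [eq_one_of_sq_eq_one_of_re_pos (by simpa using hs2) hsre,
      eq_one_of_sq_eq_one_of_re_pos (by simpa using hr2) hrre]
    ring

/-- for `a > 0`, `|b| < 1`, `|ab| < 1`, with `s`, `r` the principal
square roots of `1 - b²` and `1 - a²b²` (the unique square roots with positive
real part), `det M_s'(b) = 0` if and only if `b = 0`. -/
theorem statement15 (a : ℝ) (ha : 0 < a) (b : ℂ)
    (hb : ‖b‖ < 1) (hab : ‖(a : ℂ) * b‖ < 1)
    (s r : ℂ)
    (hs2 : s ^ 2 = 1 - b ^ 2) (hsre : 0 < s.re)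
    (hr2 : r ^ 2 = 1 - (a : ℂ) ^ 2 * b ^ 2) (hrre : 0 < r.re) :
    (Msp a b s r).det = 0 ↔ b = 0 :=
  statement15_general a ha b s r hs2 hsre hr2 hrre
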